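/- arXiv:0809.1715 — 4 statements merged into one kernel-verified Lean document; each statement's English description precedes it below -/
import Mathlib

section
/- Let x, c₁, c₂, c₁′, c₂′ ∈ ℝᵈ. If ‖x − c₂‖² − ‖x − c₁‖² ≥ 2εδ with ‖x − c₁‖ + ‖x − c₂‖ ≤ M and ‖x − c₁′‖ ≥ ‖x − c₂′‖, then ‖c₁ − c₁′‖ + ‖c₂ − c₂′‖ ≥ 2εδ / M. -/
/-!
With `a = ‖x - c₁‖` and `b = ‖x - c₂‖`, the margin `b² - a² = (b - a)(b + a) ≥ 2εδ` together with
`a + b ≤ M` forces `b - a ≥ 2εδ / M`. On the other hand, since `x` is at least as close to `c₂'` as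
to `c₁'`, the triangle inequality bounds `b - a` by the total movement of the two centers.
-/

lemma div_le_sub_of_le_sq_sub_sq {a b K M : ℝ} (ha : 0 ≤ a) (hb : 0 ≤ b) (hK : 0 < K)
    (hK_le : K ≤ b ^ 2 - a ^ 2) (hM : a + b ≤ M) : K / M ≤ b - a := by
  have hab : a < b := lt_of_pow_lt_pow_left₀ 2 hb (by linarith)
  have hsum : 0 < a + b := by linarith
  calc K / M ≤ K / (a + b) := div_le_div_of_nonneg_left hK.le hsum hM
    _ ≤ (b ^ 2 - a ^ 2) / (a + b) := div_le_div_of_nonneg_right hK_le hsum.le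
    _ = b - a := by field_simp; ring

lemma norm_sub_sub_norm_sub_le_of_norm_sub_le {E : Type*} [SeminormedAddCommGroup E]
    {x c₁ c₂ c₁' c₂' : E} (h : ‖x - c₂'‖ ≤ ‖x - c₁'‖) :
    ‖x - c₂‖ - ‖x - c₁‖ ≤ ‖c₁ - c₁'‖ + ‖c₂ - c₂'‖ := by
  have h₂ : ‖x - c₂‖ ≤ ‖x - c₂'‖ + ‖c₂ - c₂'‖ := by
    simpa only [norm_sub_rev c₂' c₂] using norm_sub_le_norm_sub_add_norm_sub x c₂' c₂
  have h₁ : ‖x - c₁'‖ ≤ ‖x - c₁‖ + ‖c₁ - c₁'‖ := norm_sub_le_norm_sub_add_norm_sub x c₁ c₁'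
  linarith

theorem center_movement_lower_bound_general (d : ℕ)
    (x c₁ c₂ c₁' c₂' : EuclideanSpace ℝ (Fin d)) (ε δ M : ℝ)
    (hε : 0 < ε) (hδ : 0 < δ)
    (h1 : ‖x - c₂‖ ^ 2 - ‖x - c₁‖ ^ 2 ≥ 2 * ε * δ)
    (h2 : ‖x - c₁‖ + ‖x - c₂‖ ≤ M)
    (h3 : ‖x - c₁'‖ ≥ ‖x - c₂'‖) :
    ‖c₁ - c₁'‖ + ‖c₂ - c₂'‖ ≥ 2 * ε * δ / M :=
  (div_le_sub_of_le_sq_sub_sq (norm_nonneg _) (norm_nonneg _) (by positivity) h1 h2).trans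
    (norm_sub_sub_norm_sub_le_of_norm_sub_le h3)

theorem center_movement_lower_bound (d : ℕ)
    (x c₁ c₂ c₁' c₂' : EuclideanSpace ℝ (Fin d)) (ε δ M : ℝ)
    (hε : 0 < ε) (hδ : 0 < δ) (hM : 0 < M)
    (h1 : ‖x - c₂‖ ^ 2 - ‖x - c₁‖ ^ 2 ≥ 2 * ε * δ)
    (h2 : ‖x - c₁‖ + ‖x - c₂‖ ≤ M)
    (h3 : ‖x - c₁'‖ ≥ ‖x - c₂'‖) :
    ‖c₁ - c₁'‖ + ‖c₂ - c₂'‖ ≥ 2 * ε * δ / M :=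
  center_movement_lower_bound_general d x c₁ c₂ c₁' c₂' ε δ M hε hδ h1 h2 h3
end

section
/- Let r be a real-valued Gaussian random variable with mean μ and standard deviation σ > 0, and let I ⊆ ℝ be an interval of length L ≥ 0. Then the probability that r² ∈ I is at most 4√L/(√(2π)·σ). In particular, it is less than 2√L/σ. -/
/-!
If `x ^ 2 ∈ [a, b]` then `|x| ∈ [√a, √b]`, so the event is covered by two intervals of length
`√b - √a ≤ √(b - a)`. The Gaussian density is at most `1 / (√(2π) σ)`, which bounds the measure of
each interval by its length divided by `√(2π) σ`; finally `√(2π) > 1`.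
-/

open MeasureTheory ProbabilityTheory Real Set

lemma Real.sqrt_sub_sqrt_le_sqrt_sub (a b : ℝ) : √b - √a ≤ √(b - a) := by
  rcases le_or_gt a 0 with ha | ha
  · rw [sqrt_eq_zero_of_nonpos ha, sub_zero]
    exact sqrt_le_sqrt (by linarith)
  rcases le_or_gt a b with hab | hab
  · have hsq : b ≤ (√(b - a) + √a) ^ 2 := by
      nlinarith [sq_sqrt (sub_nonneg.mpr hab), sq_sqrt ha.le, sqrt_nonneg (b - a), sqrt_nonneg a]
    have := (sqrt_le_sqrt hsq).trans_eq (sqrt_sq (by positivity))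
    linarith
  · linarith [sqrt_le_sqrt hab.le, sqrt_nonneg (b - a)]

lemma setOf_sq_mem_Icc_subset (a b : ℝ) :
    {x : ℝ | x ^ 2 ∈ Icc a b} ⊆ Icc (-√b) (-√a) ∪ Icc (√a) (√b) := by
  rintro x ⟨hax, hxb⟩
  have hle : |x| ≤ √b := sqrt_sq_eq_abs x ▸ sqrt_le_sqrt hxb
  have hge : √a ≤ |x| := sqrt_sq_eq_abs x ▸ sqrt_le_sqrt hax
  rcases le_or_gt 0 x with hx | hx
  · rw [abs_of_nonneg hx] at hle hge
    exact Or.inr ⟨hge, hle⟩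
  · rw [abs_of_neg hx] at hle hge
    exact Or.inl ⟨by linarith, by linarith⟩

lemma volume_setOf_sq_mem_Icc_le (a b : ℝ) :
    volume {x : ℝ | x ^ 2 ∈ Icc a b} ≤ ENNReal.ofReal (2 * √(b - a)) := by
  have hlen : ENNReal.ofReal (√b - √a) ≤ ENNReal.ofReal √(b - a) :=
    ENNReal.ofReal_le_ofReal (sqrt_sub_sqrt_le_sqrt_sub a b)
  calc volume {x : ℝ | x ^ 2 ∈ Icc a b}
      ≤ volume (Icc (-√b) (-√a)) + volume (Icc (√a) (√b)) :=
        (measure_mono (setOf_sq_mem_Icc_subset a b)).trans (measure_union_le _ _)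
    _ = ENNReal.ofReal (√b - √a) + ENNReal.ofReal (√b - √a) := by
        rw [Real.volume_Icc, Real.volume_Icc, neg_sub_neg]
    _ ≤ ENNReal.ofReal √(b - a) + ENNReal.ofReal √(b - a) := add_le_add hlen hlen
    _ = ENNReal.ofReal (2 * √(b - a)) := by
        rw [← ENNReal.ofReal_add (sqrt_nonneg _) (sqrt_nonneg _), two_mul]

lemma gaussianPDFReal_le (μ : ℝ) (v : NNReal) (x : ℝ) :
    gaussianPDFReal μ v x ≤ (√(2 * π * v))⁻¹ := by
  have hexp : rexp (-(x - μ) ^ 2 / (2 * v)) ≤ 1 :=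
    exp_le_one_iff.mpr (div_nonpos_of_nonpos_of_nonneg (by nlinarith [sq_nonneg (x - μ)])
      (by positivity))
  simpa [gaussianPDFReal] using mul_le_of_le_one_right (by positivity) hexp

lemma gaussianReal_le_mul_volume (μ : ℝ) {v : NNReal} (hv : v ≠ 0) (s : Set ℝ) :
    gaussianReal μ v s ≤ ENNReal.ofReal (√(2 * π * v))⁻¹ * volume s := by
  rw [gaussianReal_apply μ hv, ← setLIntegral_const]
  exact lintegral_mono fun x => ENNReal.ofReal_le_ofReal (gaussianPDFReal_le μ v x)

lemma one_lt_sqrt_two_mul_pi : 1 < √(2 * π) :=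
  lt_sqrt_of_sq_lt (by nlinarith [pi_gt_three])

theorem gaussian_sq_interval_bound_general (μ : ℝ) (σ : NNReal) (hσ : 0 < σ)
    (a b : ℝ) (L : ℝ) (hL : b - a = L) :
    gaussianReal μ (σ ^ 2) {x : ℝ | x ^ 2 ∈ Set.Icc a b} ≤
        ENNReal.ofReal (4 * Real.sqrt L / (Real.sqrt (2 * π) * σ)) ∧
      (0 < L → gaussianReal μ (σ ^ 2) {x : ℝ | x ^ 2 ∈ Set.Icc a b} <
        ENNReal.ofReal (2 * Real.sqrt L / σ)) := by
  have hσR : (0 : ℝ) < σ := hσ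
  have hnorm : √(2 * π * (σ ^ 2 : NNReal)) = √(2 * π) * σ := by
    push_cast
    rw [sqrt_mul (by positivity), sqrt_sq hσR.le]
  have hkey : gaussianReal μ (σ ^ 2) {x : ℝ | x ^ 2 ∈ Icc a b} ≤
      ENNReal.ofReal (2 * √L / (√(2 * π) * σ)) := by
    calc gaussianReal μ (σ ^ 2) {x : ℝ | x ^ 2 ∈ Icc a b}
        ≤ ENNReal.ofReal (√(2 * π * (σ ^ 2 : NNReal)))⁻¹ * volume {x : ℝ | x ^ 2 ∈ Icc a b} :=
          gaussianReal_le_mul_volume μ (pow_ne_zero 2 hσ.ne') _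
      _ ≤ ENNReal.ofReal (√(2 * π * (σ ^ 2 : NNReal)))⁻¹ * ENNReal.ofReal (2 * √L) :=
          mul_le_mul_right (hL ▸ volume_setOf_sq_mem_Icc_le a b) _
      _ = ENNReal.ofReal (2 * √L / (√(2 * π) * σ)) := by
          rw [← ENNReal.ofReal_mul (by positivity), hnorm, inv_mul_eq_div]
  refine ⟨hkey.trans (ENNReal.ofReal_le_ofReal ?_), fun hLpos => hkey.trans_lt ?_⟩
  · gcongr
    linarith [sqrt_nonneg L]
  · rw [ENNReal.ofReal_lt_ofReal_iff (by positivity)]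
    gcongr
    exact lt_mul_of_one_lt_left hσR one_lt_sqrt_two_mul_pi

theorem gaussian_sq_interval_bound (μ : ℝ) (σ : NNReal) (hσ : 0 < σ)
    (a b : ℝ) (L : ℝ) (hL : b - a = L) (hL0 : 0 ≤ L) :
    gaussianReal μ (σ ^ 2) {x : ℝ | x ^ 2 ∈ Set.Icc a b} ≤
        ENNReal.ofReal (4 * Real.sqrt L / (Real.sqrt (2 * π) * σ)) ∧
      (0 < L → gaussianReal μ (σ ^ 2) {x : ℝ | x ^ 2 ∈ Set.Icc a b} <
        ENNReal.ofReal (2 * Real.sqrt L / σ)) :=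
  gaussian_sq_interval_bound_general μ σ hσ a b L hL
end

section
/- Let o, p ∈ ℝᵈ be fixed, let r be a random point in ℝᵈ whose coordinates are independent Gaussians with standard deviation σ > 0 (arbitrary means), let ℓ ∈ {0, …, n−1}, and let q = (ℓ/(ℓ+1))·p + (1/(ℓ+1))·r. Then the probability that ‖r − o‖ ≤ δ and that r is within distance ε of the bisecting hyperplane of o and q is at most 2√(nδε)/σ. -/
open MeasureTheory ProbabilityTheory

/-- The law of a random point in `ℝᵈ` whose coordinates are independent Gaussians
with means `μ i` and standard deviation `σ`. -/
noncomputable def gaussianVec (d : ℕ) (μ : Fin d → ℝ) (σ : NNReal) :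
    Measure (EuclideanSpace ℝ (Fin d)) :=
  (Measure.pi fun i => gaussianReal (μ i) (σ ^ 2)).map
    (EuclideanSpace.equiv (Fin d) ℝ).symm

/-!
The distance from `r` to the bisector of `o` and `q` is `|‖r - o‖² - ‖r - q‖²| / (2 ‖o - q‖)`,
and `‖o - q‖ ≤ 2 (δ + ε)` on the event. Since `r - q = c (r - p)` with `c = ℓ / (ℓ + 1)`, the event
forces `|‖r - o‖² - c² ‖r - p‖²| ≤ 4 (δ + ε) ε`: the point `r` lies in a thin shell around an
Apollonius sphere, or in a small ball around `o` when `ℓ = 0`. Such a shell (or the ball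
`‖r - o‖ ≤ δ`, which is good enough when `δ ≤ 2π n ε`) meets every line parallel to the first
coordinate axis in at most two short intervals; conditioned on the other coordinates, their
Gaussian probability is at most their length times the maximal density `1 / (σ √(2π))`.
-/

open Metric AffineSubspace
open scoped ENNReal NNReal Real RealInnerProductSpace

section Bisector

variable {V P : Type*} [NormedAddCommGroup V] [InnerProductSpace ℝ V] [MetricSpace P]
  [NormedAddTorsor V P]

theorem abs_dist_sq_sub_dist_sq_le_of_mem_perpBisector {o q x y : P}
    (hy : y ∈ perpBisector o q) : |dist x o ^ 2 - dist x q ^ 2| ≤ 2 * dist o q * dist x y := by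
  have hyoq : ‖y -ᵥ o‖ = ‖y -ᵥ q‖ := by
    simpa only [dist_eq_norm_vsub V] using (mem_perpBisector_iff_dist_eq.1 hy)
  have key : dist x o ^ 2 - dist x q ^ 2 = 2 * ⟪x -ᵥ y, q -ᵥ o⟫ := by
    rw [dist_eq_norm_vsub V, dist_eq_norm_vsub V, ← vsub_add_vsub_cancel x y o,
      ← vsub_add_vsub_cancel x y q, norm_add_sq_real, norm_add_sq_real, hyoq,
      ← vsub_sub_vsub_cancel_left q o y, inner_sub_right]
    ring
  rw [key, abs_mul, abs_two, dist_comm o q, dist_eq_norm_vsub V, dist_eq_norm_vsub V]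
  nlinarith [abs_real_inner_le_norm (x -ᵥ y) (q -ᵥ o)]

theorem abs_dist_sq_sub_dist_sq_le_infDist_perpBisector (x o q : P) :
    |dist x o ^ 2 - dist x q ^ 2| ≤ 2 * dist o q * infDist x (perpBisector o q) := by
  rcases eq_or_ne o q with rfl | hoq
  · simp
  have hpos : 0 < 2 * dist o q := mul_pos two_pos (dist_pos.2 hoq)
  rw [← div_le_iff₀' hpos, le_infDist perpBisector_nonempty]
  intro y hy
  rw [div_le_iff₀' hpos]
  exact abs_dist_sq_sub_dist_sq_le_of_mem_perpBisector hy

theorem dist_le_two_mul_infDist_perpBisector (o q : P) :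
    dist o q ≤ 2 * infDist o (perpBisector o q) := by
  rw [← div_le_iff₀' two_pos, le_infDist perpBisector_nonempty]
  intro y hy
  have := dist_triangle o y q
  rw [dist_comm y q, ← mem_perpBisector_iff_dist_eq'.1 hy] at this
  linarith

end Bisector

section Apollonius

variable {E : Type*} [NormedAddCommGroup E] [InnerProductSpace ℝ E]

theorem exists_norm_sub_sq_sub_mul_norm_sub_sq_eq {t : ℝ} (ht : t ≠ 1) (a b : E) :
    ∃ z : E, ∃ K : ℝ, ∀ x : E, ‖x - a‖ ^ 2 - t * ‖x - b‖ ^ 2 = (1 - t) * (‖x - z‖ ^ 2 - K) := by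
  have ht' : 1 - t ≠ 0 := sub_ne_zero.2 ht.symm
  set z : E := (1 - t)⁻¹ • (a - t • b)
  refine ⟨z, ‖z‖ ^ 2 - (‖a‖ ^ 2 - t * ‖b‖ ^ 2) / (1 - t), fun x => ?_⟩
  have hxz : ⟪x, z⟫ = (1 - t)⁻¹ * (⟪x, a⟫ - t * ⟪x, b⟫) := by
    simp only [z, inner_smul_right, inner_sub_right]
  rw [norm_sub_sq_real, norm_sub_sq_real, norm_sub_sq_real, hxz]
  field_simp
  ring

theorem abs_norm_sub_sq_sub_sq_mul_norm_sub_sq_le_of_infDist_le {c a δ ε : ℝ} (hca : c + a = 1)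
    {o p r : E} (hr : ‖r - o‖ ≤ δ) (hH : infDist r {x | ‖x - o‖ = ‖x - (c • p + a • r)‖} ≤ ε) :
    |‖r - o‖ ^ 2 - c ^ 2 * ‖r - p‖ ^ 2| ≤ 4 * (δ + ε) * ε := by
  obtain rfl : a = 1 - c := by linarith
  set q := c • p + (1 - c) • r
  have hH' : {x | ‖x - o‖ = ‖x - q‖} = (perpBisector o q : Set E) := by
    ext x
    simp only [Set.mem_ofPred_eq, SetLike.mem_coe, mem_perpBisector_iff_dist_eq, dist_eq_norm]
  rw [hH'] at hH
  have hrq : ‖r - q‖ ^ 2 = c ^ 2 * ‖r - p‖ ^ 2 := by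
    rw [show r - q = c • (r - p) by module, norm_smul, mul_pow, Real.norm_eq_abs, sq_abs]
  have hoq : dist o q ≤ 2 * (δ + ε) := by
    have := infDist_le_infDist_add_dist (x := o) (y := r) (s := (perpBisector o q : Set E))
    rw [dist_comm, dist_eq_norm] at this
    linarith [dist_le_two_mul_infDist_perpBisector o q]
  have hδ : 0 ≤ δ := (norm_nonneg _).trans hr
  have hε : 0 ≤ ε := infDist_nonneg.trans hH
  calc |‖r - o‖ ^ 2 - c ^ 2 * ‖r - p‖ ^ 2| = |dist r o ^ 2 - dist r q ^ 2| := by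
        rw [dist_eq_norm, dist_eq_norm, hrq]
    _ ≤ 2 * dist o q * infDist r (perpBisector o q) :=
        abs_dist_sq_sub_dist_sq_le_infDist_perpBisector r o q
    _ ≤ 2 * (2 * (δ + ε)) * ε := mul_le_mul (by linarith) hH infDist_nonneg (by positivity)
    _ = 4 * (δ + ε) * ε := by ring

end Apollonius

theorem gaussianReal_le_ofReal_mul_volume (m : ℝ) {v : ℝ≥0} (hv : v ≠ 0) (s : Set ℝ) :
    gaussianReal m v s ≤ ENNReal.ofReal (√(2 * π * v))⁻¹ * volume s := by
  rw [gaussianReal_apply m hv, ← setLIntegral_const]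
  refine setLIntegral_mono measurable_const fun t _ => ENNReal.ofReal_le_ofReal ?_
  rw [gaussianPDFReal]
  refine mul_le_of_le_one_right (by positivity) (Real.exp_le_one_iff.2 ?_)
  exact div_nonpos_of_nonpos_of_nonneg (neg_nonpos.2 (sq_nonneg _)) (by positivity)

theorem MeasureTheory.Measure.pi_le_of_forall_insertNth_le {n : ℕ} {α : Fin (n + 1) → Type*}
    [∀ i, MeasurableSpace (α i)] (ρ : ∀ i, Measure (α i)) [∀ i, IsProbabilityMeasure (ρ i)]
    (i : Fin (n + 1)) {B : Set (∀ j, α j)} (hB : MeasurableSet B) {β : ℝ≥0∞}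
    (h : ∀ w : ∀ j, α (i.succAbove j), ρ i {t | Fin.insertNth i t w ∈ B} ≤ β) :
    Measure.pi ρ B ≤ β := by
  have hmp := (measurePreserving_piFinSuccAbove ρ i).symm
  rw [← hmp.measure_preimage_equiv, Measure.prod_apply_symm (hmp.measurable hB)]
  calc _ ≤ ∫⁻ _, β ∂(Measure.pi fun j => ρ (i.succAbove j)) := lintegral_mono fun w => h w
    _ = β := by simp

theorem gaussianVec_le_of_forall_volume_slice_le {m : ℕ} (μ : Fin (m + 1) → ℝ) {σ : ℝ≥0}
    (hσ : σ ≠ 0) (i : Fin (m + 1)) {B : Set (EuclideanSpace ℝ (Fin (m + 1)))}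
    (hB : MeasurableSet B) {L : ℝ}
    (h : ∀ w : Fin m → ℝ, volume {t | WithLp.toLp 2 (Fin.insertNth i t w) ∈ B} ≤ ENNReal.ofReal L) :
    gaussianVec (m + 1) μ σ B ≤ ENNReal.ofReal (L / (σ * √(2 * π))) := by
  have hmeas := (EuclideanSpace.equiv (Fin (m + 1)) ℝ).symm.continuous.measurable
  rw [gaussianVec, Measure.map_apply hmeas hB]
  refine Measure.pi_le_of_forall_insertNth_le _ i (hmeas hB) fun w => ?_
  have hsd : √(2 * π * ((σ ^ 2 : ℝ≥0) : ℝ)) = σ * √(2 * π) := by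
    rw [NNReal.coe_pow, mul_comm, Real.sqrt_mul (by positivity), Real.sqrt_sq σ.coe_nonneg]
  calc _ ≤ ENNReal.ofReal (√(2 * π * ((σ ^ 2 : ℝ≥0) : ℝ)))⁻¹ * ENNReal.ofReal L :=
        (gaussianReal_le_ofReal_mul_volume _ (pow_ne_zero 2 hσ) _).trans (by gcongr; exact h w)
    _ = ENNReal.ofReal (L / (σ * √(2 * π))) := by
        rw [← ENNReal.ofReal_mul (by positivity), hsd, div_eq_inv_mul]

theorem gaussianVec_closedBall_le {m : ℕ} (μ : Fin (m + 1) → ℝ) {σ : ℝ≥0} (hσ : σ ≠ 0)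
    (o : EuclideanSpace ℝ (Fin (m + 1))) (R : ℝ) :
    gaussianVec (m + 1) μ σ (closedBall o R) ≤ ENNReal.ofReal (2 * R / (σ * √(2 * π))) := by
  refine gaussianVec_le_of_forall_volume_slice_le μ hσ 0 isClosed_closedBall.measurableSet
    fun w => ?_
  rw [← Real.volume_closedBall]
  refine measure_mono fun t ht => ?_
  simpa using (PiLp.dist_apply_le _ o 0).trans (mem_closedBall.1 ht)

theorem volume_setOf_abs_sub_sq_sub_le_le (c A V : ℝ) :
    volume {t : ℝ | |(t - c) ^ 2 - A| ≤ V} ≤ ENNReal.ofReal (2 * √(2 * V)) := by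
  set lo := √(A - V)
  set hi := √(A + V)
  have hsub : {t : ℝ | |(t - c) ^ 2 - A| ≤ V} ⊆
      Set.Icc (c - hi) (c - lo) ∪ Set.Icc (c + lo) (c + hi) := by
    intro t ht
    rw [Set.mem_ofPred_eq, abs_le] at ht
    have hhi : |t - c| ≤ hi := Real.abs_le_sqrt (by linarith)
    have hlo : lo ≤ |t - c| := by
      rw [← Real.sqrt_sq_eq_abs]; exact Real.sqrt_le_sqrt (by linarith)
    rcases le_total c t with hct | hct
    · rw [abs_of_nonneg (sub_nonneg.2 hct)] at hhi hlo
      exact Or.inr ⟨by linarith, by linarith⟩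
    · rw [abs_of_nonpos (sub_nonpos.2 hct)] at hhi hlo
      exact Or.inl ⟨by linarith, by linarith⟩
  have hwidth : hi - lo ≤ √(2 * V) := by
    rw [sub_le_iff_le_add, Real.sqrt_le_iff]
    refine ⟨by positivity, ?_⟩
    nlinarith [Real.sq_sqrt' (x := 2 * V), Real.sq_sqrt' (x := A - V), le_max_left (2 * V) 0,
      le_max_left (A - V) 0, Real.sqrt_nonneg (2 * V), Real.sqrt_nonneg (A - V)]
  calc _ ≤ volume (Set.Icc (c - hi) (c - lo)) + volume (Set.Icc (c + lo) (c + hi)) :=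
        (measure_mono hsub).trans (measure_union_le _ _)
    _ ≤ ENNReal.ofReal √(2 * V) + ENNReal.ofReal √(2 * V) := by
        rw [Real.volume_Icc, Real.volume_Icc]
        gcongr <;> linarith
    _ = ENNReal.ofReal (2 * √(2 * V)) := by
        rw [← ENNReal.ofReal_add (by positivity) (by positivity)]
        ring_nf

theorem gaussianVec_setOf_abs_norm_sub_sq_sub_le_le {m : ℕ} (μ : Fin (m + 1) → ℝ) {σ : ℝ≥0}
    (hσ : σ ≠ 0) (z : EuclideanSpace ℝ (Fin (m + 1))) (K V : ℝ) :
    gaussianVec (m + 1) μ σ {r | |‖r - z‖ ^ 2 - K| ≤ V}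
      ≤ ENNReal.ofReal (2 * √(2 * V) / (σ * √(2 * π))) := by
  have hB : IsClosed {r : EuclideanSpace ℝ (Fin (m + 1)) | |‖r - z‖ ^ 2 - K| ≤ V} :=
    isClosed_le (by fun_prop) continuous_const
  refine gaussianVec_le_of_forall_volume_slice_le μ hσ 0 hB.measurableSet fun w => ?_
  refine le_of_eq_of_le (congrArg volume ?_)
    (volume_setOf_abs_sub_sq_sub_le_le (z 0) (K - ∑ j, (w j - z (Fin.succ j)) ^ 2) V)
  ext t
  simp only [EuclideanSpace.norm_sq_eq, PiLp.sub_apply, Real.norm_eq_abs, sq_abs,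
    Fin.sum_univ_succ, Fin.insertNth_zero', Set.mem_ofPred_eq, Fin.cons_zero, Fin.cons_succ,
    sub_sub_eq_add_sub]

theorem two_mul_div_mul_sqrt_two_pi_le {σ L x : ℝ} (hσ : 0 < σ)
    (h : L ^ 2 ≤ 2 * π * x) : 2 * L / (σ * √(2 * π)) ≤ 2 * √x / σ := by
  have hLx : L ≤ √(2 * π) * √x := by
    rw [← Real.sqrt_mul (by positivity)]
    exact Real.le_sqrt_of_sq_le h
  rw [mul_comm σ, ← div_div, div_le_div_iff_of_pos_right hσ, div_le_iff₀ (by positivity)]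
  linarith

theorem one_sub_div_add_one_sq (x : ℝ) (hx : x + 1 ≠ 0) :
    1 - (x / (x + 1)) ^ 2 = (2 * x + 1) / (x + 1) ^ 2 := by
  field_simp
  ring

theorem four_mul_add_mul_le_two_pi_mul {n : ℕ} {δ ε : ℝ} (hn : 1 ≤ n) (hε : 0 < ε)
    (hδ : 2 * π * n * ε < δ) : 4 * (δ + ε) * ε ≤ 2 * π * (n * δ * ε) := by
  have h6 : 6 ≤ 2 * π * n := by nlinarith [Real.pi_gt_three, (by exact_mod_cast hn : (1 : ℝ) ≤ n)]
  have hεδ : 6 * ε < δ := by nlinarith [mul_le_mul_of_nonneg_right h6 hε.le]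
  nlinarith [mul_le_mul_of_nonneg_right h6 (mul_pos (by linarith : 0 < δ) hε).le,
    mul_lt_mul_of_pos_right hεδ hε]

theorem four_mul_add_mul_div_one_sub_sq_le {n ℓ : ℕ} {δ ε : ℝ} (hℓ : 1 ≤ ℓ) (hℓn : ℓ + 1 ≤ n)
    (hε : 0 < ε) (hδ : 2 * π * n * ε < δ) :
    4 * (δ + ε) * ε / (1 - ((ℓ : ℝ) / (ℓ + 1)) ^ 2) ≤ π * (n * δ * ε) := by
  have hℓ1 : (1 : ℝ) ≤ ℓ := by exact_mod_cast hℓ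
  have hℓn' : (ℓ : ℝ) + 1 ≤ n := by exact_mod_cast hℓn
  rw [one_sub_div_add_one_sq _ (by positivity), div_div_eq_mul_div, div_le_iff₀ (by positivity)]
  have hn : 3 / 2 * ((ℓ : ℝ) + 1) ^ 2 ≤ n * (2 * ℓ + 1) := by nlinarith
  have h12 : 12 ≤ 2 * π * n := by nlinarith [Real.pi_gt_three]
  have hεδ : 12 * ε < δ := by nlinarith [mul_le_mul_of_nonneg_right h12 hε.le]
  have hδε : 0 < δ * ε := mul_pos (by linarith) hε
  have hA : (0 : ℝ) < (ℓ + 1) ^ 2 := by positivity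
  nlinarith [mul_le_mul_of_nonneg_left hn (by positivity : 0 ≤ π * (δ * ε)),
    mul_le_mul_of_nonneg_right Real.pi_gt_three.le
      (by positivity : 0 ≤ 3 / 2 * (ℓ + 1) ^ 2 * (δ * ε)),
    mul_lt_mul_of_pos_right hεδ (mul_pos hε hA)]

theorem single_point_determines_center (d n : ℕ) (hd : 1 ≤ d) (hn : 1 ≤ n)
    (o p : EuclideanSpace ℝ (Fin d)) (μ : Fin d → ℝ) (σ : NNReal) (hσ : 0 < σ)
    (ℓ : ℕ) (hℓ : ℓ ≤ n - 1) (δ ε : ℝ) (hδ : 0 < δ) (hε : 0 < ε) :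
    gaussianVec d μ σ
      {r : EuclideanSpace ℝ (Fin d) |
        ‖r - o‖ ≤ δ ∧
        Metric.infDist r
          {x : EuclideanSpace ℝ (Fin d) |
            ‖x - o‖ = ‖x - (((ℓ : ℝ) / (ℓ + 1)) • p + ((1 : ℝ) / (ℓ + 1)) • r)‖} ≤ ε} ≤
      ENNReal.ofReal (2 * Real.sqrt (n * δ * ε) / σ) := by
  obtain ⟨m, rfl⟩ : ∃ m, d = m + 1 := ⟨d - 1, by omega⟩
  set c : ℝ := ℓ / (ℓ + 1)
  have hca : c + 1 / (ℓ + 1) = 1 := by rw [← add_div, div_self (by positivity)]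
  have hbound : ∀ L, L ^ 2 ≤ 2 * π * (n * δ * ε) →
      ENNReal.ofReal (2 * L / (σ * √(2 * π))) ≤ ENNReal.ofReal (2 * √(n * δ * ε) / σ) :=
    fun L h => ENNReal.ofReal_le_ofReal (two_mul_div_mul_sqrt_two_pi_le hσ h)
  refine (measure_mono (t := {r | ‖r - o‖ ≤ δ ∧
      |‖r - o‖ ^ 2 - c ^ 2 * ‖r - p‖ ^ 2| ≤ 4 * (δ + ε) * ε}) fun r hr =>
    ⟨hr.1, abs_norm_sub_sq_sub_sq_mul_norm_sub_sq_le_of_infDist_le hca hr.1 hr.2⟩).trans ?_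
  rcases le_or_gt δ (2 * π * n * ε) with hsmall | hlarge
  · exact (measure_mono fun r hr => mem_closedBall_iff_norm.2 hr.1).trans
      ((gaussianVec_closedBall_le μ hσ.ne' o δ).trans (hbound δ (by nlinarith)))
  rcases Nat.eq_zero_or_pos ℓ with rfl | hℓpos
  · refine (measure_mono fun r hr => mem_closedBall_iff_norm.2 (Real.le_sqrt_of_sq_le ?_)).trans
      ((gaussianVec_closedBall_le μ hσ.ne' o √(4 * (δ + ε) * ε)).trans (hbound _ ?_))
    · simpa [c] using hr.2
    rw [Real.sq_sqrt (by positivity)]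
    exact four_mul_add_mul_le_two_pi_mul hn hε hlarge
  · have hc : 0 < 1 - c ^ 2 := by rw [one_sub_div_add_one_sq _ (by positivity)]; positivity
    obtain ⟨z, K, hzK⟩ := exists_norm_sub_sq_sub_mul_norm_sub_sq_eq (sub_pos.1 hc).ne o p
    refine (measure_mono fun r hr => ?_).trans ((gaussianVec_setOf_abs_norm_sub_sq_sub_le_le μ
      hσ.ne' z K (4 * (δ + ε) * ε / (1 - c ^ 2))).trans (hbound _ ?_))
    · rw [Set.mem_ofPred_eq, le_div_iff₀' hc, ← abs_of_pos hc, ← abs_mul, ← hzK]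
      exact hr.2
    rw [Real.sq_sqrt (by positivity)]
    linarith [four_mul_add_mul_div_one_sub_sq_le hℓpos (by omega) hε hlarge]
end

section
/- Let A, B be disjoint finite nonempty sets of real numbers with max A < min B, |A| ≥ 2, |A ∪ B| ≤ n, and suppose no interval of length ε contains three or more points of A ∪ B. Then the center of mass of A ∪ B satisfies mass(A ∪ B) ≥ mass(A) + ε/(2n). -/
/-!
Every point `x` of `A` other than its maximum satisfies `x < max A < min B`, so sparseness of
these three points forces `x + ε < min B`. As `A` has at least two points, this pushes
`mass A` at least `ε / 2` below `min B ≤ mass B`, and merging `B` into `A` moves the centroid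
towards `mass B` by the fraction `|B| / |A ∪ B| ≥ 1 / n` of the distance.
-/

/-- The center of mass of a finite set of reals. -/
noncomputable def mass (S : Finset ℝ) : ℝ := (S.card : ℝ)⁻¹ * ∑ x ∈ S, x

theorem card_mul_mass (S : Finset ℝ) : (S.card : ℝ) * mass S = ∑ x ∈ S, x := by
  rcases S.eq_empty_or_nonempty with rfl | hS
  · simp
  · rw [mass, mul_inv_cancel_left₀ (by exact_mod_cast hS.card_pos.ne')]

theorem min'_le_mass (S : Finset ℝ) (hS : S.Nonempty) : S.min' hS ≤ mass S := by
  have hcard : (0 : ℝ) < S.card := by exact_mod_cast hS.card_pos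
  have hsum : (S.card : ℝ) * S.min' hS ≤ ∑ x ∈ S, x := by
    simpa using S.card_nsmul_le_sum id _ (fun x hx => S.min'_le x hx)
  rw [← card_mul_mass] at hsum
  exact le_of_mul_le_mul_left hsum hcard

theorem mass_le_sub_half_of_le_erase {A : Finset ℝ} (hA : 2 ≤ A.card) {ε c a : ℝ} (hε : 0 ≤ ε)
    (ha : a ∈ A) (hle : ∀ x ∈ A, x ≤ c) (hle_erase : ∀ x ∈ A.erase a, x ≤ c - ε) :
    mass A ≤ c - ε / 2 := by
  have hcard : (2 : ℝ) ≤ A.card := by exact_mod_cast hA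
  have hcard_erase : ((A.erase a).card : ℝ) = A.card - 1 := by
    rw [Finset.card_erase_of_mem ha, Nat.cast_sub (by omega), Nat.cast_one]
  have hsum_erase : ∑ x ∈ A.erase a, x ≤ (A.card - 1) * (c - ε) := by
    simpa [hcard_erase] using (A.erase a).sum_le_card_nsmul id _ hle_erase
  have hsum : (A.card : ℝ) * mass A ≤ A.card * (c - ε / 2) := by
    rw [card_mul_mass, ← Finset.add_sum_erase A (fun x => x) ha]
    nlinarith [hle a ha]
  exact le_of_mul_le_mul_left hsum (by linarith)

theorem add_lt_of_not_exists_Icc_three {x y z ε : ℝ} (hxy : x < y) (hyz : y < z)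
    (h : ¬ ∃ a : ℝ, x ∈ Set.Icc a (a + ε) ∧ y ∈ Set.Icc a (a + ε) ∧ z ∈ Set.Icc a (a + ε)) :
    x + ε < z := by
  by_contra! hzx
  exact h ⟨x, ⟨le_rfl, by linarith⟩, ⟨hxy.le, by linarith⟩, ⟨by linarith, hzx⟩⟩

theorem mass_union_sub_mass {A B : Finset ℝ} (hA : A.Nonempty) (hdisj : Disjoint A B) :
    mass (A ∪ B) - mass A = B.card / (A ∪ B).card * (mass B - mass A) := by
  have hcard : ((A ∪ B).card : ℝ) ≠ 0 := by
    exact_mod_cast (hA.mono Finset.subset_union_left).card_pos.ne'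
  have hunion := card_mul_mass (A ∪ B)
  rw [Finset.sum_union hdisj, ← card_mul_mass, ← card_mul_mass] at hunion
  rw [Finset.card_union_of_disjoint hdisj, Nat.cast_add] at hunion hcard ⊢
  field_simp
  linarith

theorem centroid_shift_of_sparse_general (n : ℕ) (ε : ℝ) (hε : 0 < ε)
    (A B : Finset ℝ) (hA : A.Nonempty) (hB : B.Nonempty)
    (hdisj : Disjoint A B) (hAB : A.max' hA < B.min' hB)
    (hcardA : 2 ≤ A.card) (hcard : (A ∪ B).card ≤ n)
    (hsparse : ∀ x ∈ A ∪ B, ∀ y ∈ A ∪ B, ∀ z ∈ A ∪ B,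
      x ≠ y → x ≠ z → y ≠ z →
      ¬ ∃ a : ℝ, x ∈ Set.Icc a (a + ε) ∧ y ∈ Set.Icc a (a + ε) ∧
        z ∈ Set.Icc a (a + ε)) :
    mass (A ∪ B) ≥ mass A + ε / (2 * n) := by
  set x₂ := A.max' hA
  set x₃ := B.min' hB
  have hx₂ : x₂ ∈ A := A.max'_mem hA
  have hx₃ : x₃ ∈ B := B.min'_mem hB
  have hgap : ∀ x ∈ A.erase x₂, x ≤ x₃ - ε := fun x hx => by
    have hxA := Finset.mem_of_mem_erase hx
    have hxx₂ : x < x₂ := (A.le_max' x hxA).lt_of_ne (Finset.ne_of_mem_erase hx)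
    have := add_lt_of_not_exists_Icc_three hxx₂ hAB <| hsparse x (Finset.mem_union_left _ hxA)
      x₂ (Finset.mem_union_left _ hx₂) x₃ (Finset.mem_union_right _ hx₃) hxx₂.ne
      (hxx₂.trans hAB).ne hAB.ne
    linarith
  have hmassA : mass A ≤ x₃ - ε / 2 := mass_le_sub_half_of_le_erase hcardA hε.le hx₂
    (fun x hx => (A.le_max' x hx).trans hAB.le) hgap
  have hmassB : x₃ ≤ mass B := min'_le_mass B hB
  have hfrac : 1 / (n : ℝ) ≤ B.card / (A ∪ B).card := by
    gcongr
    exact_mod_cast hB.card_pos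
  have hshift : ε / (2 * n) ≤ mass (A ∪ B) - mass A := by
    rw [mass_union_sub_mass hA hdisj]
    calc ε / (2 * n) = 1 / (n : ℝ) * (ε / 2) := by ring
      _ ≤ B.card / (A ∪ B).card * (mass B - mass A) := by gcongr; linarith
  linarith

theorem centroid_shift_of_sparse (n : ℕ) (hn : 0 < n) (ε : ℝ) (hε : 0 < ε)
    (A B : Finset ℝ) (hA : A.Nonempty) (hB : B.Nonempty)
    (hdisj : Disjoint A B) (hAB : A.max' hA < B.min' hB)
    (hcardA : 2 ≤ A.card) (hcard : (A ∪ B).card ≤ n)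
    (hsparse : ∀ x ∈ A ∪ B, ∀ y ∈ A ∪ B, ∀ z ∈ A ∪ B,
      x ≠ y → x ≠ z → y ≠ z →
      ¬ ∃ a : ℝ, x ∈ Set.Icc a (a + ε) ∧ y ∈ Set.Icc a (a + ε) ∧
        z ∈ Set.Icc a (a + ε)) :
    mass (A ∪ B) ≥ mass A + ε / (2 * n) :=
  centroid_shift_of_sparse_general n ε hε A B hA hB hdisj hAB hcardA hcard hsparse
end
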